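/- arXiv:2602.05761 — 2 statements merged into one kernel-verified Lean document; each statement's English description precedes it below -/
import Mathlib

section
/- Let k be a field of characteristic 2, S the polynomial ring in the entries of a generic symmetric n×n matrix with determinant f, and q = 2^s with s ≥ 1. Then the element g = f^{q/2 - 1} · x_{11}^{q/2} satisfies f·g ∈ m^{[q]}, where m^{[q]} is the ideal generated by the q-th powers of all the variables. -/
/-!
In characteristic 2 the terms of the Leibniz expansion of a symmetric determinant indexed by `σ`
and `σ⁻¹` are equal and cancel, so only involutions contribute. For an involution `σ`, the term
times `x₀₀` contains a square: `x₀₀²` if `σ` fixes `0`, and `x_{0,σ 0}²` otherwise. Hence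
`f * x₀₀ ∈ m^{[2]}`, and raising to the power `q / 2`, which is additive in characteristic 2,
gives `f * g = (f * x₀₀) ^ (q / 2) ∈ m^{[q]}`.
-/

open MvPolynomial Finset Equiv

theorem Ideal.pow_mem_span_range_pow {R ι : Type*} [CommRing R] (p : ℕ) [ExpChar R p] (e : ℕ)
    {f : ι → R} {a : R} (ha : a ∈ Ideal.span (Set.range f)) :
    a ^ p ^ e ∈ Ideal.span (Set.range fun i => f i ^ p ^ e) := by
  have := Ideal.mem_map_of_mem (iterateFrobenius R p e) ha
  rwa [Ideal.map_span, ← Set.range_comp] at this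

namespace Matrix

variable {n R : Type*} [Fintype n] [CommRing R] {A : Matrix n n R}

theorem IsSymm.prod_perm_inv (hA : A.IsSymm) (σ : Perm n) :
    ∏ i, A (σ⁻¹ i) i = ∏ i, A (σ i) i := by
  rw [← Equiv.prod_comp σ (fun i => A (σ⁻¹ i) i)]
  exact prod_congr rfl fun i _ => by simp only [Perm.coe_inv, symm_apply_apply, hA.apply]

theorem IsSymm.det_eq_sum_involutions [DecidableEq n] [CharP R 2] (hA : A.IsSymm) :
    A.det = ∑ σ ∈ univ.filter (fun σ : Perm n => σ⁻¹ = σ), ∏ i, A (σ i) i := by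
  have sign_eq_one (σ : Perm n) : ((Perm.sign σ : ℤ) : R) = 1 := by
    rcases Int.units_eq_one_or (Perm.sign σ) with h | h <;> simp [h, CharTwo.neg_eq]
  have non_involutions : ∑ σ ∈ univ.filter (fun σ : Perm n => ¬σ⁻¹ = σ), ∏ i, A (σ i) i = 0 :=
    sum_involution (fun σ _ => σ⁻¹)
      (fun σ _ => by rw [hA.prod_perm_inv, CharTwo.add_self_eq_zero])
      (fun σ hσ _ => (mem_filter.1 hσ).2)
      (fun σ hσ => by simpa [eq_comm] using hσ)
      (fun σ _ => inv_inv σ)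
  simp only [det_apply', sign_eq_one, one_mul]
  rw [← sum_filter_add_sum_filter_not univ (fun σ : Perm n => σ⁻¹ = σ), non_involutions, add_zero]

theorem IsSymm.sq_dvd_prod_perm_mul_diag [DecidableEq n] (hA : A.IsSymm) {σ : Perm n}
    (hσ : σ⁻¹ = σ) (i : n) :
    A (σ i) i ^ 2 ∣ (∏ j, A (σ j) j) * A i i := by
  rw [← mul_prod_erase univ (fun j => A (σ j) j) (mem_univ i)]
  by_cases hi : σ i = i
  · rw [hi]
    exact ⟨∏ j ∈ univ.erase i, A (σ j) j, by ring⟩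
  · have hσσ : σ (σ i) = i := by
      nth_rw 1 [← hσ]
      exact σ.symm_apply_apply i
    rw [← mul_prod_erase (univ.erase i) (fun j => A (σ j) j) (mem_erase.2 ⟨hi, mem_univ _⟩),
      hσσ, hA.apply]
    exact ⟨(∏ j ∈ (univ.erase i).erase (σ i), A (σ j) j) * A i i, by ring⟩

theorem IsSymm.det_mul_diag_mem_span_sq [DecidableEq n] [CharP R 2] (hA : A.IsSymm) (i : n) :
    A.det * A i i ∈ Ideal.span (Set.range fun p : n × n => A p.1 p.2 ^ 2) := by
  rw [hA.det_eq_sum_involutions, sum_mul]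
  refine Ideal.sum_mem _ fun σ hσ => ?_
  obtain ⟨c, hc⟩ := hA.sq_dvd_prod_perm_mul_diag (mem_filter.1 hσ).2 i
  rw [hc]
  exact Ideal.mul_mem_right _ _ (Ideal.subset_span ⟨(σ i, i), rfl⟩)

end Matrix

/-- In characteristic 2, with `f` the determinant of the generic symmetric `n × n` matrix and
`q = 2 ^ s`, `s ≥ 1`, the element `g = f ^ (q/2 - 1) * x_{11} ^ (q/2)` satisfies
`f * g ∈ m^{[q]} = ⟨x_{ij} ^ q⟩`. Here `q / 2 = 2 ^ (s - 1)`. -/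
theorem stmt_2 (k : Type*) [Field k] [CharP k 2] (n : ℕ) (hn : 0 < n) (s : ℕ) (hs : 1 ≤ s)
    (M : Matrix (Fin n) (Fin n)
      (MvPolynomial {ij : Fin n × Fin n // ij.1 ≤ ij.2} k))
    (hM : ∀ i j, M i j = X ⟨(min i j, max i j), min_le_max⟩) :
    M.det *
      (M.det ^ (2 ^ (s - 1) - 1) *
        X (⟨(⟨0, hn⟩, ⟨0, hn⟩), le_rfl⟩ : {ij : Fin n × Fin n // ij.1 ≤ ij.2}) ^ 2 ^ (s - 1)) ∈
      Ideal.span (Set.range fun v : {ij : Fin n × Fin n // ij.1 ≤ ij.2} =>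
        (X v : MvPolynomial {ij : Fin n × Fin n // ij.1 ≤ ij.2} k) ^ 2 ^ s) := by
  have hsymm : M.IsSymm := Matrix.IsSymm.ext fun i j => by simp only [hM, min_comm, max_comm]
  have hdiag : M ⟨0, hn⟩ ⟨0, hn⟩ = X ⟨(⟨0, hn⟩, ⟨0, hn⟩), le_rfl⟩ := by simp [hM]
  have hpow : M.det * (M.det ^ (2 ^ (s - 1) - 1) * M ⟨0, hn⟩ ⟨0, hn⟩ ^ 2 ^ (s - 1)) =
      (M.det * M ⟨0, hn⟩ ⟨0, hn⟩) ^ 2 ^ (s - 1) := by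
    rw [mul_pow, ← mul_assoc, ← pow_succ', Nat.sub_add_cancel Nat.one_le_two_pow]
  rw [← hdiag, hpow]
  refine Ideal.span_mono ?_ <|
    Ideal.pow_mem_span_range_pow 2 (s - 1) (hsymm.det_mul_diag_mem_span_sq ⟨0, hn⟩)
  rintro _ ⟨⟨i, j⟩, rfl⟩
  exact ⟨⟨(min i j, max i j), min_le_max⟩, by
    dsimp only
    rw [hM, ← pow_mul, ← pow_succ', Nat.sub_add_cancel hs]⟩
end

section
/- Let k be a field of characteristic 2, S the polynomial ring in the entries of a generic symmetric n×n matrix (so dim S = n(n+1)/2), f its determinant, R = S/⟨f⟩, m the maximal homogeneous ideal, and q = 2^s with s ≥ 1. Then v_R(q) := max{d : m^d ⊄ (m^{[q]} + ⟨f⟩)} satisfies v_R(q) ≥ q·(n²−1)/2 − n(n−1)/2. -/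
/-!
Put `t = q/2`, pick a diagonal variable `x₀ = x_{i₀i₀}` and let `ν` be the exponent of
`(∏ᵢ x_{ii})^(t-1) · x₀^t`. The test monomial is `μ = x^((q-1)·𝟙 - ν)`, of degree
`t(n²-1) - n(n-1)/2`, and the test element is `g = f^(t-1) · x₀^t`.

In characteristic 2 the determinant of a symmetric matrix with square-zero entries is killed by
each diagonal entry: the terms of `σ` and `σ⁻¹` cancel, and the term of an involution repeats an
entry. Hence `f · x₀ ∈ m^[2]`, and Frobenius gives `f · g = (f · x₀)^t ∈ m^[q]`. So if
`μ ∈ m^[q] + ⟨f⟩` then `μ · g ∈ m^[q]`. But modulo the off-diagonal variables `f` is the product of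
the diagonal ones, so `g ≡ x^ν` and `μ · g` has coefficient `1` at `x^((q-1)·𝟙)`, which is
impossible for an element of `m^[q]`.
-/

open MvPolynomial

namespace Ideal

theorem mul_mem_of_mem_sup_span_singleton {R : Type*} [CommRing R] {I : Ideal R} {f g x : R}
    (hx : x ∈ I ⊔ span {f}) (hfg : f * g ∈ I) : x * g ∈ I := by
  obtain ⟨a, ha, b, hb, rfl⟩ := Submodule.mem_sup.mp hx
  obtain ⟨r, rfl⟩ := mem_span_singleton'.mp hb
  rw [add_mul, mul_assoc]
  exact add_mem (mul_mem_right _ _ ha) (mul_mem_left _ _ hfg)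

theorem pow_expChar_pow_mem_span_range {R ι : Type*} [CommSemiring R] {p : ℕ} [ExpChar R p]
    (e : ℕ) {f : ι → R} {x : R} (hx : x ∈ span (Set.range f)) :
    x ^ p ^ e ∈ span (Set.range fun i => f i ^ p ^ e) := by
  have := mem_map_of_mem (iterateFrobenius R p e) hx
  rwa [map_span, ← Set.range_comp] at this

end Ideal

namespace Matrix

variable {ι A : Type*} [Fintype ι] [DecidableEq ι] [CommRing A]

theorem prod_perm_mul_apply_self_eq_zero {M : Matrix ι ι A} (hM : M.IsSymm)
    (hsq : ∀ i j, M i j * M i j = 0) {σ : Equiv.Perm ι} (hσ : σ⁻¹ = σ) (i : ι) :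
    (∏ j, M (σ j) j) * M i i = 0 := by
  rw [← Finset.mul_prod_erase _ _ (Finset.mem_univ i)]
  by_cases hi : σ i = i
  · rw [hi, mul_right_comm, hsq, zero_mul]
  · have hσσ : σ (σ i) = i := by simpa using (congrArg (· (σ i)) hσ).symm
    rw [← Finset.mul_prod_erase _ _ (Finset.mem_erase.mpr ⟨hi, Finset.mem_univ _⟩), hσσ,
      ← hM.apply (σ i) i, ← mul_assoc, hsq, zero_mul, zero_mul]

theorem det_mul_apply_self_eq_zero (h2 : (2 : A) = 0) {M : Matrix ι ι A} (hM : M.IsSymm)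
    (hsq : ∀ i j, M i j * M i j = 0) (i : ι) : M.det * M i i = 0 := by
  rw [det_apply, Finset.sum_mul]
  refine Finset.sum_ninvolution (fun σ => σ⁻¹) (fun σ => ?_) (fun σ hσ => ?_)
    (fun _ => Finset.mem_univ _) inv_inv
  · have hprod : ∏ j, M (σ⁻¹ j) j = ∏ j, M (σ j) j := by
      rw [← Equiv.prod_comp σ]
      simp only [Equiv.Perm.coe_inv, Equiv.symm_apply_apply]
      exact Finset.prod_congr rfl fun j _ => hM.apply _ _
    rw [Equiv.Perm.sign_inv, hprod, ← two_mul, h2, zero_mul]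
  · contrapose! hσ
    rw [smul_mul_assoc, prod_perm_mul_apply_self_eq_zero hM hsq hσ, smul_zero]

theorem det_sub_prod_diag_mem {I : Ideal A} (M : Matrix ι ι A)
    (hI : ∀ i j, i ≠ j → M i j ∈ I) : M.det - ∏ i, M i i ∈ I := by
  rw [← Ideal.Quotient.mk_eq_mk_iff_sub_mem, RingHom.map_det, map_prod]
  convert det_diagonal (d := fun i => Ideal.Quotient.mk I (M i i))
  ext i j
  obtain rfl | hij := eq_or_ne i j
  · simp
  · simpa [hij, Ideal.Quotient.eq_zero_iff_mem] using hI i j hij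

end Matrix

namespace MvPolynomial

variable {σ R : Type*} [CommSemiring R]

theorem coeff_eq_zero_of_mem_span_X_pow {q : ℕ} {p : MvPolynomial σ R}
    (hp : p ∈ Ideal.span (Set.range fun v => X v ^ q)) {c : σ →₀ ℕ} (hc : ∀ v, c v < q) :
    coeff c p = 0 := by
  have hgen : (Set.range fun v => (X v : MvPolynomial σ R) ^ q) =
      (monomial · 1) '' Set.range fun v => Finsupp.single v q := by
    rw [← Set.range_comp]
    simp_rw [Function.comp_def, X_pow_eq_monomial]
  rw [hgen, mem_ideal_span_monomial_image] at hp
  by_contra hne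
  obtain ⟨_, ⟨v, rfl⟩, hle⟩ := hp c (mem_support_iff.mpr hne)
  exact (hc v).not_ge (by simpa using hle v)

theorem coeff_eq_zero_of_mem_span_X_image {s : Set σ} {p : MvPolynomial σ R}
    (hp : p ∈ Ideal.span (X '' s)) {c : σ →₀ ℕ} (hc : ∀ v ∈ s, c v = 0) : coeff c p = 0 := by
  by_contra hne
  obtain ⟨v, hv, hcv⟩ := mem_ideal_span_X_image.mp hp c (mem_support_iff.mpr hne)
  exact hcv (hc v hv)

theorem monomial_tsub_mul_notMem_span_X_pow {q : ℕ} {d e : σ →₀ ℕ} (hde : d ≤ e)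
    (he : ∀ v, e v < q) {p : MvPolynomial σ R} (hp : coeff d p ≠ 0) :
    monomial (e - d) 1 * p ∉ Ideal.span (Set.range fun v => X v ^ q) := by
  intro hmem
  refine hp ?_
  rw [← one_mul (coeff d p), ← coeff_monomial_mul, tsub_add_cancel_of_le hde]
  exact coeff_eq_zero_of_mem_span_X_pow hmem he

end MvPolynomial

theorem Nat.succ_choose_two_mul_sub_eq (n : ℕ) {t : ℕ} (ht : 1 ≤ t) :
    (n + 1).choose 2 * (2 * t - 1) - ((t - 1) * n + t) = t * (n ^ 2 - 1) - n.choose 2 := by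
  obtain ⟨u, rfl⟩ : ∃ u, t = u + 1 := ⟨t - 1, by omega⟩
  obtain _ | m := n
  · simp
  have hsucc : (m + 1 + 1).choose 2 = m + 1 + (m + 1).choose 2 := by
    rw [Nat.choose_succ_succ', Nat.choose_one_right]
  have hsq : (m + 1) ^ 2 - 1 = 2 * (m + 1).choose 2 + m := by
    rw [Nat.choose_two_right, Nat.mul_div_cancel' (Nat.even_mul_pred_self _).two_dvd,
      Nat.add_sub_cancel]
    ring_nf
    omega
  rw [hsucc, hsq, show 2 * (u + 1) - 1 = 2 * u + 1 by omega, Nat.add_sub_cancel]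
  generalize (m + 1).choose 2 = h
  rw [Nat.sub_eq_of_eq_add (c := (2 * u + 1) * h + (u + 1) * m) (by ring)]
  exact (Nat.sub_eq_of_eq_add (by ring)).symm

abbrev SymIdx (ι : Type*) [LinearOrder ι] := {ij : ι × ι // ij.1 ≤ ij.2}

namespace SymIdx

variable {ι : Type*} [LinearOrder ι]

def diag (i : ι) : SymIdx ι := ⟨(i, i), le_rfl⟩

def offDiag : Set (SymIdx ι) := {v | v.1.1 ≠ v.1.2}

theorem diag_injective : Function.Injective (diag : ι → SymIdx ι) :=
  fun _ _ h => congrArg (fun v : SymIdx ι => v.1.1) h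

theorem diag_ne_of_mem_offDiag {v : SymIdx ι} (hv : v ∈ offDiag) (i : ι) : diag i ≠ v := by
  rintro rfl
  exact hv rfl

theorem eq_diag_or_mem_offDiag (v : SymIdx ι) : (∃ i, v = diag i) ∨ v ∈ offDiag := by
  by_cases hv : v.1.1 = v.1.2
  · exact .inl ⟨v.1.1, Subtype.ext (Prod.ext rfl hv.symm)⟩
  · exact .inr hv

theorem card [Fintype ι] : Fintype.card (SymIdx ι) = (Fintype.card ι + 1).choose 2 := by
  rw [← Sym2.card, Fintype.card_congr Sym2.sortEquiv]

variable [Fintype ι]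

noncomputable def diagExp : SymIdx ι →₀ ℕ := ∑ i, Finsupp.single (diag i) 1

theorem diagExp_apply_diag (i : ι) : diagExp (diag i) = 1 := by
  classical
  simp [diagExp, Finsupp.finsetSum_apply, Finsupp.single_apply, diag_injective.eq_iff]

theorem diagExp_apply_of_mem_offDiag {v : SymIdx ι} (hv : v ∈ offDiag) : diagExp v = 0 := by
  simp [diagExp, Finsupp.finsetSum_apply, diag_ne_of_mem_offDiag hv]

theorem monomial_diagExp (k : Type*) [CommSemiring k] :
    monomial diagExp (1 : k) = ∏ i : ι, X (diag i) := by
  rw [diagExp, monomial_sum_one]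
  rfl

noncomputable def diagTermExp (t : ℕ) (i₀ : ι) : SymIdx ι →₀ ℕ :=
  (t - 1) • diagExp + Finsupp.single (diag i₀) t

theorem monomial_diagTermExp (k : Type*) [CommSemiring k] (t : ℕ) (i₀ : ι) :
    monomial (diagTermExp t i₀) (1 : k) = (∏ i : ι, X (diag i)) ^ (t - 1) * X (diag i₀) ^ t := by
  rw [diagTermExp, ← monomial_diagExp, monomial_pow, X_pow_eq_monomial, monomial_mul, one_pow,
    one_mul]

theorem diagTermExp_apply_of_mem_offDiag (t : ℕ) (i₀ : ι) {v : SymIdx ι} (hv : v ∈ offDiag) :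
    diagTermExp t i₀ v = 0 := by
  simp [diagTermExp, diagExp_apply_of_mem_offDiag hv, diag_ne_of_mem_offDiag hv]

theorem diagTermExp_apply_le (t : ℕ) (i₀ : ι) (v : SymIdx ι) : diagTermExp t i₀ v ≤ 2 * t - 1 := by
  classical
  obtain ⟨i, rfl⟩ | hv := eq_diag_or_mem_offDiag v
  · have : Finsupp.single (diag i₀) t (diag i) ≤ t := by
      rw [Finsupp.single_apply]; split_ifs <;> omega
    simp only [diagTermExp, Finsupp.coe_add, Finsupp.coe_smul, Pi.add_apply, Pi.smul_apply,
      diagExp_apply_diag, smul_eq_mul, mul_one]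
    omega
  · simp [diagTermExp_apply_of_mem_offDiag t i₀ hv]

theorem degree_diagTermExp (t : ℕ) (i₀ : ι) :
    (diagTermExp t i₀).degree = (t - 1) * Fintype.card ι + t := by
  simp [diagTermExp, diagExp, map_sum]

theorem diagTermExp_le_const (t : ℕ) (i₀ : ι) :
    diagTermExp t i₀ ≤ Finsupp.equivFunOnFinite.symm fun _ => 2 * t - 1 :=
  diagTermExp_apply_le t i₀

theorem degree_const_tsub_diagTermExp {t : ℕ} (ht : 1 ≤ t) (i₀ : ι) :
    (Finsupp.equivFunOnFinite.symm (fun _ => 2 * t - 1) - diagTermExp t i₀).degree =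
      t * (Fintype.card ι ^ 2 - 1) - (Fintype.card ι).choose 2 := by
  have hsum := congrArg Finsupp.degree (tsub_add_cancel_of_le (diagTermExp_le_const t i₀))
  rw [map_add, degree_diagTermExp, Finsupp.degree_eq_sum (Finsupp.equivFunOnFinite.symm _)] at hsum
  simp only [Finsupp.coe_equivFunOnFinite_symm, Finset.sum_const, Finset.card_univ, card,
    smul_eq_mul] at hsum
  rw [← Nat.succ_choose_two_mul_sub_eq _ ht, ← hsum, Nat.add_sub_cancel]

end SymIdx

open SymIdx

noncomputable def genericSymm (k ι : Type*) [CommSemiring k] [LinearOrder ι] :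
    Matrix ι ι (MvPolynomial (SymIdx ι) k) :=
  fun i j => X ⟨(min i j, max i j), min_le_max⟩

section genericSymm

variable {k ι : Type*} [LinearOrder ι]

theorem genericSymm_isSymm [CommSemiring k] : (genericSymm k ι).IsSymm :=
  Matrix.IsSymm.ext fun i j => by simp only [genericSymm, min_comm, max_comm]

theorem genericSymm_apply_self [CommSemiring k] (i : ι) : genericSymm k ι i i = X (diag i) := by
  simp only [genericSymm, min_self, max_self]; rfl

theorem genericSymm_apply_mem_span_offDiag [CommSemiring k] {i j : ι} (hij : i ≠ j) :
    genericSymm k ι i j ∈ Ideal.span (X '' offDiag) :=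
  Ideal.subset_span ⟨⟨(min i j, max i j), min_le_max⟩, fun h => hij <| by
    rcases le_total i j with hle | hle <;> simp_all, rfl⟩

variable [Fintype ι] [DecidableEq ι] [CommRing k]

theorem det_genericSymm_sub_prod_mem :
    (genericSymm k ι).det - ∏ i, X (diag i) ∈ Ideal.span (X '' offDiag) := by
  have h := Matrix.det_sub_prod_diag_mem (genericSymm k ι) fun _ _ =>
    genericSymm_apply_mem_span_offDiag
  rwa [Finset.prod_congr rfl fun i _ => genericSymm_apply_self i] at h

theorem det_genericSymm_mul_X_diag_mem [CharP k 2] (i : ι) :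
    (genericSymm k ι).det * X (diag i) ∈ Ideal.span (Set.range fun v => X v ^ 2) := by
  set π := Ideal.Quotient.mk
    (Ideal.span (Set.range fun v => (X v : MvPolynomial (SymIdx ι) k) ^ 2))
  have h2 := congrArg π (CharTwo.two_eq_zero (R := MvPolynomial (SymIdx ι) k))
  rw [map_ofNat, map_zero] at h2
  have hsq (i j : ι) : (genericSymm k ι).map π i j * (genericSymm k ι).map π i j = 0 := by
    rw [Matrix.map_apply, ← map_mul, ← sq, Ideal.Quotient.eq_zero_iff_mem]
    exact Ideal.subset_span ⟨_, rfl⟩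
  have h := Matrix.det_mul_apply_self_eq_zero h2 (genericSymm_isSymm.map π) hsq i
  rwa [Matrix.map_apply, genericSymm_apply_self, ← RingHom.mapMatrix_apply, ← RingHom.map_det,
    ← map_mul, Ideal.Quotient.eq_zero_iff_mem] at h

theorem det_genericSymm_mul_X_diag_pow_mem [CharP k 2] (r : ℕ) (i : ι) :
    ((genericSymm k ι).det * X (diag i)) ^ 2 ^ r ∈
      Ideal.span (Set.range fun v => X v ^ 2 ^ (r + 1)) := by
  simpa only [← pow_mul, ← pow_succ'] using
    Ideal.pow_expChar_pow_mem_span_range (p := 2) r (det_genericSymm_mul_X_diag_mem (k := k) i)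

theorem coeff_diagTermExp_det_genericSymm_pow_mul (t : ℕ) (i₀ : ι) :
    coeff (diagTermExp t i₀) ((genericSymm k ι).det ^ (t - 1) * X (diag i₀) ^ t) = 1 := by
  have hdiff : (genericSymm k ι).det ^ (t - 1) * X (diag i₀) ^ t -
      monomial (diagTermExp t i₀) 1 ∈ Ideal.span (X '' offDiag) := by
    rw [monomial_diagTermExp, ← Ideal.Quotient.mk_eq_mk_iff_sub_mem]
    simp only [map_mul, map_pow]
    rw [(Ideal.Quotient.mk_eq_mk_iff_sub_mem _ _).mpr det_genericSymm_sub_prod_mem]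
  rw [← sub_add_cancel ((genericSymm k ι).det ^ (t - 1) * X (diag i₀) ^ t)
    (monomial (diagTermExp t i₀) 1), coeff_add, coeff_monomial, if_pos rfl,
    coeff_eq_zero_of_mem_span_X_image hdiff fun v hv => diagTermExp_apply_of_mem_offDiag t i₀ hv,
    zero_add]

end genericSymm

/-- In characteristic 2, for the symmetric determinantal hypersurface `R = S/⟨f⟩` (with
`S = k[x_{ij} : i ≤ j]` of dimension `n(n+1)/2` and `f` the symmetric determinant), for
`q = 2 ^ s`, `s ≥ 1`, one has `v_R(q) ≥ q(n²-1)/2 - n(n-1)/2`; that is,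
`m ^ (2^(s-1)·(n²-1) - n(n-1)/2)` is not contained in `m^{[q]} + ⟨f⟩`. -/
theorem stmt_7 (k : Type*) [Field k] [CharP k 2] (n : ℕ) (hn : 0 < n) (s : ℕ) (hs : 1 ≤ s)
    (M : Matrix (Fin n) (Fin n)
      (MvPolynomial {ij : Fin n × Fin n // ij.1 ≤ ij.2} k))
    (hM : ∀ i j, M i j = X ⟨(min i j, max i j), min_le_max⟩) :
    ¬ (Ideal.span (Set.range
          (X : {ij : Fin n × Fin n // ij.1 ≤ ij.2} →
            MvPolynomial {ij : Fin n × Fin n // ij.1 ≤ ij.2} k))) ^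
        (2 ^ (s - 1) * (n ^ 2 - 1) - n * (n - 1) / 2) ≤
      Ideal.span (Set.range fun v : {ij : Fin n × Fin n // ij.1 ≤ ij.2} =>
        (X v : MvPolynomial {ij : Fin n × Fin n // ij.1 ≤ ij.2} k) ^ 2 ^ s) ⊔
      Ideal.span {M.det} := by
  obtain rfl : M = genericSymm k (Fin n) := Matrix.ext hM
  obtain ⟨r, rfl⟩ : ∃ r, s = r + 1 := ⟨s - 1, by omega⟩
  set t := 2 ^ r
  have ht : 1 ≤ t := Nat.one_le_two_pow
  let i₀ : Fin n := ⟨0, hn⟩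
  let e : SymIdx (Fin n) →₀ ℕ := Finsupp.equivFunOnFinite.symm fun _ => 2 * t - 1
  intro H
  have hμ : monomial (e - diagTermExp t i₀) (1 : k) ∈
      idealOfVars _ k ^ (2 ^ (r + 1 - 1) * (n ^ 2 - 1) - n * (n - 1) / 2) := by
    rw [monomial_mem_pow_idealOfVars_iff _ _ one_ne_zero, degree_const_tsub_diagTermExp ht,
      Fintype.card_fin, Nat.choose_two_right, Nat.add_sub_cancel]
  have hfg : (genericSymm k (Fin n)).det *
      ((genericSymm k (Fin n)).det ^ (t - 1) * X (diag i₀) ^ t) ∈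
        Ideal.span (Set.range fun v => X v ^ 2 ^ (r + 1)) := by
    rw [← mul_assoc, mul_pow_sub_one (by positivity), ← mul_pow]
    exact det_genericSymm_mul_X_diag_pow_mem r i₀
  refine monomial_tsub_mul_notMem_span_X_pow (diagTermExp_le_const t i₀)
    (fun v => ?_) ?_ (Ideal.mul_mem_of_mem_sup_span_singleton (H hμ) hfg)
  · simp only [Finsupp.coe_equivFunOnFinite_symm]
    omega
  · rw [coeff_diagTermExp_det_genericSymm_pow_mul]
    exact one_ne_zero
end
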